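/- arXiv:2105.09716 — 2 statements merged into one kernel-verified Lean document; each statement's English description precedes it below -/
import Mathlib

section
/- Error propagation bound for inexact augmented Lagrangian update: Let x_k : S × A → ℝ be given, let (V̂, ĥ) be the exact minimizer of L_μ(V,h,x_k) over V and h ≥ 0, and set x̂(s,a) = Z_μ(V̂,ĥ,x_k,s,a). Suppose (V₊,h₊) is an approximate minimizer with ε_L := L_μ(V₊,h₊,x_k) − inf_{h≥0,V} L_μ(V,h,x_k), and x₊ satisfies ε_x := Σ_{s,a} w(s,a)(x₊(s,a) − Z_μ(V₊,h₊,x_k,s,a))². Then Σ_{s,a} w(s,a)(x₊(s,a) − x̂(s,a))² ≤ 2 ε_x + 4 μ ε_L. -/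
/-- The Z-function `Z_μ(V,h,x,s,a)`. -/
def Zmu {S A : Type*} [Fintype S]
    (P : S → A → S → ℝ) (r : S → A → ℝ) (γ μ : ℝ)
    (V : S → ℝ) (h x : S → A → ℝ) (s : S) (a : A) : ℝ :=
  x s a + μ * (h s a + r s a + γ * (∑ s', P s a s' * V s') - V s)

/-- The weighted augmented Lagrangian `L_μ(V,h,x)`. -/
noncomputable def Lmu {S A : Type*} [Fintype S] [Fintype A]
    (P : S → A → S → ℝ) (r : S → A → ℝ) (ρ₀ : S → ℝ) (γ μ : ℝ)
    (w : S → A → ℝ) (V : S → ℝ) (h x : S → A → ℝ) : ℝ :=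
  (∑ s, ρ₀ s * V s) +
    (1 / (2 * μ)) * ∑ s, ∑ a, w s a * (Zmu P r γ μ V h x s a) ^ 2

/-! Along the segment from the exact minimizer `(V̂, ĥ)` to `(V₊, h₊)`, which stays in the
feasible set `h ≥ 0`, `L_μ` is a quadratic in the parameter `t` whose concavity defect
`t (1 - t)` carries the coefficient `(1/(2μ)) Σ w (Z₊ - Ẑ)²`; minimality at `t = 0` then bounds
this coefficient by `ε_L`. The estimate follows from `x₊ - x̂ = (x₊ - Z₊) + (Z₊ - Ẑ)` and
`(a + b)² ≤ 2a² + 2b²`. -/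

open Filter Set Topology

theorem le_sub_of_forall_le_segment {a b c : ℝ}
    (h : ∀ t ∈ Ioo (0 : ℝ) 1, a ≤ (1 - t) * a + t * b - t * (1 - t) * c) : c ≤ b - a := by
  have hlim : Tendsto (fun t : ℝ => (1 - t) * c) (𝓝[>] 0) (𝓝 c) := by
    have : Tendsto (fun t : ℝ => (1 - t) * c) (𝓝 0) (𝓝 ((1 - 0) * c)) :=
      ((continuous_const.sub continuous_id).mul continuous_const).tendsto 0
    simpa using this.mono_left nhdsWithin_le_nhds
  exact le_of_tendsto hlim (eventually_of_mem (Ioo_mem_nhdsGT one_pos) fun t ht =>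
    le_of_mul_le_mul_left (by linarith [h t ht]) ht.1)

section WeightedSqNorm

variable {S A : Type*} [Fintype S] [Fintype A]

def weightedSqNorm (w f : S → A → ℝ) : ℝ := ∑ s, ∑ a, w s a * f s a ^ 2

theorem weightedSqNorm_add_smul_sub (w f g : S → A → ℝ) (t : ℝ) :
    weightedSqNorm w (f + t • (g - f)) = (1 - t) * weightedSqNorm w f + t * weightedSqNorm w g
      - t * (1 - t) * weightedSqNorm w (g - f) := by
  simp only [weightedSqNorm, Finset.mul_sum, ← Finset.sum_sub_distrib, ← Finset.sum_add_distrib]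
  refine Finset.sum_congr rfl fun s _ => Finset.sum_congr rfl fun a _ => ?_
  simp only [Pi.add_apply, Pi.sub_apply, Pi.smul_apply, smul_eq_mul]
  ring

theorem weightedSqNorm_sub_le {w : S → A → ℝ} (hw : ∀ s a, 0 ≤ w s a) (f g k : S → A → ℝ) :
    weightedSqNorm w (f - k) ≤ 2 * weightedSqNorm w (f - g) + 2 * weightedSqNorm w (g - k) := by
  simp only [weightedSqNorm, Finset.mul_sum, ← Finset.sum_add_distrib]
  refine Finset.sum_le_sum fun s _ => Finset.sum_le_sum fun a _ => ?_
  calc w s a * (f s a - k s a) ^ 2 = w s a * ((f s a - g s a) + (g s a - k s a)) ^ 2 := by ring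
    _ ≤ w s a * (2 * ((f s a - g s a) ^ 2 + (g s a - k s a) ^ 2)) :=
      mul_le_mul_of_nonneg_left add_sq_le (hw s a)
    _ = _ := by simp only [Pi.sub_apply]; ring

end WeightedSqNorm

section AugmentedLagrangian

variable {S A : Type*} [Fintype S] (P : S → A → S → ℝ) (r : S → A → ℝ) (γ μ : ℝ)

theorem Zmu_add_smul_sub (V₁ V₂ : S → ℝ) (h₁ h₂ x : S → A → ℝ) (t : ℝ) :
    Zmu P r γ μ (V₁ + t • (V₂ - V₁)) (h₁ + t • (h₂ - h₁)) x
      = Zmu P r γ μ V₁ h₁ x + t • (Zmu P r γ μ V₂ h₂ x - Zmu P r γ μ V₁ h₁ x) := by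
  ext s a
  have hexp : ∑ s', P s a s' * (V₁ s' + t * (V₂ s' - V₁ s'))
      = ∑ s', P s a s' * V₁ s' + t * (∑ s', P s a s' * V₂ s' - ∑ s', P s a s' * V₁ s') := by
    simp only [mul_add, mul_sub, Finset.sum_add_distrib, Finset.sum_sub_distrib, Finset.mul_sum,
      mul_left_comm t]
  simp only [Zmu, Pi.add_apply, Pi.sub_apply, Pi.smul_apply, smul_eq_mul, hexp]
  ring

variable [Fintype A] (ρ₀ : S → ℝ) (w : S → A → ℝ)

theorem Lmu_eq_add_weightedSqNorm (V : S → ℝ) (h x : S → A → ℝ) :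
    Lmu P r ρ₀ γ μ w V h x
      = ∑ s, ρ₀ s * V s + (1 / (2 * μ)) * weightedSqNorm w (Zmu P r γ μ V h x) :=
  rfl

theorem Lmu_add_smul_sub (V₁ V₂ : S → ℝ) (h₁ h₂ x : S → A → ℝ) (t : ℝ) :
    Lmu P r ρ₀ γ μ w (V₁ + t • (V₂ - V₁)) (h₁ + t • (h₂ - h₁)) x
      = (1 - t) * Lmu P r ρ₀ γ μ w V₁ h₁ x + t * Lmu P r ρ₀ γ μ w V₂ h₂ x
        - t * (1 - t) * ((1 / (2 * μ)) *
          weightedSqNorm w (Zmu P r γ μ V₂ h₂ x - Zmu P r γ μ V₁ h₁ x)) := by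
  have hlin : ∑ s, ρ₀ s * (V₁ + t • (V₂ - V₁)) s
      = (1 - t) * ∑ s, ρ₀ s * V₁ s + t * ∑ s, ρ₀ s * V₂ s := by
    simp only [Finset.mul_sum, ← Finset.sum_add_distrib]
    refine Finset.sum_congr rfl fun s _ => ?_
    simp only [Pi.add_apply, Pi.smul_apply, Pi.sub_apply, smul_eq_mul]
    ring
  simp only [Lmu_eq_add_weightedSqNorm, Zmu_add_smul_sub, weightedSqNorm_add_smul_sub, hlin]
  ring

theorem weightedSqNorm_Zmu_sub_le_Lmu_sub {x : S → A → ℝ} {V₀ : S → ℝ} {h₀ : S → A → ℝ}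
    (h₀_nonneg : ∀ s a, 0 ≤ h₀ s a)
    (h₀_min : ∀ (V : S → ℝ) (h : S → A → ℝ), (∀ s a, 0 ≤ h s a) →
      Lmu P r ρ₀ γ μ w V₀ h₀ x ≤ Lmu P r ρ₀ γ μ w V h x)
    (V : S → ℝ) (h : S → A → ℝ) (h_nonneg : ∀ s a, 0 ≤ h s a) :
    (1 / (2 * μ)) * weightedSqNorm w (Zmu P r γ μ V h x - Zmu P r γ μ V₀ h₀ x)
      ≤ Lmu P r ρ₀ γ μ w V h x - Lmu P r ρ₀ γ μ w V₀ h₀ x := by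
  refine le_sub_of_forall_le_segment fun t ht => ?_
  have h_segment_nonneg : ∀ s a, 0 ≤ (h₀ + t • (h - h₀)) s a := fun s a => by
    simp only [Pi.add_apply, Pi.smul_apply, Pi.sub_apply, smul_eq_mul]
    linarith [mul_nonneg ht.1.le (h_nonneg s a), mul_nonneg (sub_nonneg.2 ht.2.le) (h₀_nonneg s a)]
  simpa only [Lmu_add_smul_sub] using h₀_min (V₀ + t • (V - V₀)) _ h_segment_nonneg

end AugmentedLagrangian

theorem inexact_alm_error_bound_general
    {S A : Type*} [Fintype S] [Fintype A]
    (P : S → A → S → ℝ)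
    (r : S → A → ℝ)
    (ρ₀ : S → ℝ)
    (γ : ℝ)
    (w : S → A → ℝ) (hw : ∀ s a, 0 < w s a)
    (μ : ℝ) (hμ : 0 < μ)
    (xk : S → A → ℝ)
    -- exact minimizer (V̂, ĥ) of L_μ(·,·,x_k) over V and h ≥ 0
    (Vhat : S → ℝ) (hhat : S → A → ℝ)
    (hhat_nonneg : ∀ s a, 0 ≤ hhat s a)
    (hhat_min : ∀ (V : S → ℝ) (h : S → A → ℝ), (∀ s a, 0 ≤ h s a) →
      Lmu P r ρ₀ γ μ w Vhat hhat xk ≤ Lmu P r ρ₀ γ μ w V h xk)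
    -- approximate minimizer (V₊, h₊) and approximate multiplier x₊
    (Vp : S → ℝ) (hp : S → A → ℝ) (hp_nonneg : ∀ s a, 0 ≤ hp s a)
    (xp : S → A → ℝ)
    (εL εx : ℝ)
    (hεL : εL = Lmu P r ρ₀ γ μ w Vp hp xk - Lmu P r ρ₀ γ μ w Vhat hhat xk)
    (hεx : εx = ∑ s, ∑ a,
      w s a * (xp s a - Zmu P r γ μ Vp hp xk s a) ^ 2) :
    ∑ s, ∑ a, w s a * (xp s a - Zmu P r γ μ Vhat hhat xk s a) ^ 2
      ≤ 2 * εx + 4 * μ * εL := by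
  have hεx_norm : εx = weightedSqNorm w (xp - Zmu P r γ μ Vp hp xk) := hεx
  have hZ_dist :
      weightedSqNorm w (Zmu P r γ μ Vp hp xk - Zmu P r γ μ Vhat hhat xk) ≤ 2 * μ * εL := by
    have := weightedSqNorm_Zmu_sub_le_Lmu_sub P r γ μ ρ₀ w hhat_nonneg hhat_min Vp hp hp_nonneg
    rwa [← hεL, one_div, inv_mul_le_iff₀ (by positivity)] at this
  calc weightedSqNorm w (xp - Zmu P r γ μ Vhat hhat xk)
      ≤ 2 * weightedSqNorm w (xp - Zmu P r γ μ Vp hp xk)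
        + 2 * weightedSqNorm w (Zmu P r γ μ Vp hp xk - Zmu P r γ μ Vhat hhat xk) :=
        weightedSqNorm_sub_le (fun s a => (hw s a).le) _ _ _
    _ ≤ 2 * εx + 4 * μ * εL := by linarith

/-- Error propagation for an inexact augmented Lagrangian update:
`Σ w (x₊ - x̂)² ≤ 2 ε_x + 4 μ ε_L`. -/
theorem inexact_alm_error_bound
    {S A : Type*} [Fintype S] [Fintype A]
    (P : S → A → S → ℝ) (hP : ∀ s a, ∑ s', P s a s' = 1)
    (r : S → A → ℝ)
    (ρ₀ : S → ℝ) (hρ₀ : ∀ s, 0 ≤ ρ₀ s) (hρsum : ∑ s, ρ₀ s = 1)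
    (γ : ℝ) (hγ : 0 < γ) (hγ1 : γ < 1)
    (w : S → A → ℝ) (hw : ∀ s a, 0 < w s a) (hwsum : ∑ s, ∑ a, w s a = 1)
    (μ : ℝ) (hμ : 0 < μ)
    (xk : S → A → ℝ)
    -- exact minimizer (V̂, ĥ) of L_μ(·,·,x_k) over V and h ≥ 0
    (Vhat : S → ℝ) (hhat : S → A → ℝ)
    (hhat_nonneg : ∀ s a, 0 ≤ hhat s a)
    (hhat_min : ∀ (V : S → ℝ) (h : S → A → ℝ), (∀ s a, 0 ≤ h s a) →
      Lmu P r ρ₀ γ μ w Vhat hhat xk ≤ Lmu P r ρ₀ γ μ w V h xk)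
    -- approximate minimizer (V₊, h₊) and approximate multiplier x₊
    (Vp : S → ℝ) (hp : S → A → ℝ) (hp_nonneg : ∀ s a, 0 ≤ hp s a)
    (xp : S → A → ℝ)
    (εL εx : ℝ)
    (hεL : εL = Lmu P r ρ₀ γ μ w Vp hp xk - Lmu P r ρ₀ γ μ w Vhat hhat xk)
    (hεx : εx = ∑ s, ∑ a,
      w s a * (xp s a - Zmu P r γ μ Vp hp xk s a) ^ 2) :
    ∑ s, ∑ a, w s a * (xp s a - Zmu P r γ μ Vhat hhat xk s a) ^ 2
      ≤ 2 * εx + 4 * μ * εL :=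
  inexact_alm_error_bound_general P r ρ₀ γ w hw μ hμ xk Vhat hhat hhat_nonneg hhat_min Vp hp
    hp_nonneg xp εL εx hεL hεx
end

section
/- Key intermediate inequality: with (V̂,ĥ) an exact minimizer of L_μ(·,·,x_k) over V and h ≥ 0, x̂ = Z_μ(V̂,ĥ,x_k,·), (V₊,h₊) any point with h₊ ≥ 0, and x̄ = Z_μ(V₊,h₊,x_k,·), the suboptimality ε_L = L_μ(V₊,h₊,x_k) − L_μ(V̂,ĥ,x_k) satisfies ε_L ≥ (1/(2μ)) Σ_{s,a} w(s,a)(x̂(s,a) − x̄(s,a))². -/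
open Finset Filter Topology

theorem le_of_forall_one_sub_mul_le {c d : ℝ} (h : ∀ t ∈ Set.Ioo (0 : ℝ) 1, (1 - t) * c ≤ d) :
    c ≤ d := by
  have hlim : Tendsto (fun t : ℝ => (1 - t) * c) (𝓝[>] 0) (𝓝 c) := by
    have : Tendsto (fun t : ℝ => (1 - t) * c) (𝓝 0) (𝓝 ((1 - 0) * c)) :=
      (tendsto_id.const_sub 1).mul_const c
    simpa using this.mono_left nhdsWithin_le_nhds
  refine le_of_tendsto hlim ?_
  filter_upwards [Ioo_mem_nhdsGT zero_lt_one] with t ht using h t ht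

theorem le_sub_of_forall_le_convex_comb_sub {a b c : ℝ}
    (h : ∀ t ∈ Set.Ioo (0 : ℝ) 1, a ≤ (1 - t) * a + t * b - t * (1 - t) * c) :
    c ≤ b - a := by
  refine le_of_forall_one_sub_mul_le fun t ht => ?_
  have h' : t * ((1 - t) * c) ≤ t * (b - a) := by linarith [h t ht]
  exact le_of_mul_le_mul_left h' ht.1

theorem Finset.sum_mul_convex_comb {ι : Type*} (s : Finset ι) (f u v : ι → ℝ) (t : ℝ) :
    ∑ i ∈ s, f i * ((1 - t) * u i + t * v i) =
      (1 - t) * ∑ i ∈ s, f i * u i + t * ∑ i ∈ s, f i * v i := by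
  simp only [mul_sum, ← sum_add_distrib]
  exact sum_congr rfl fun i _ => by ring

theorem Finset.sum_mul_convex_comb_sq {ι : Type*} (s : Finset ι) (w u v : ι → ℝ) (t : ℝ) :
    ∑ i ∈ s, w i * ((1 - t) * u i + t * v i) ^ 2 =
      (1 - t) * ∑ i ∈ s, w i * u i ^ 2 + t * ∑ i ∈ s, w i * v i ^ 2
        - t * (1 - t) * ∑ i ∈ s, w i * (u i - v i) ^ 2 := by
  simp only [mul_sum, ← sum_add_distrib, ← sum_sub_distrib]
  exact sum_congr rfl fun i _ => by ring

section ConvexComb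

variable {S A : Type*} [Fintype S] (P : S → A → S → ℝ) (r : S → A → ℝ) (ρ₀ : S → ℝ)
  (γ μ : ℝ) (w : S → A → ℝ) (V V' : S → ℝ) (h h' x : S → A → ℝ) (t : ℝ)

theorem Zmu_convex_comb (s : S) (a : A) :
    Zmu P r γ μ ((1 - t) • V + t • V') ((1 - t) • h + t • h') x s a =
      (1 - t) * Zmu P r γ μ V h x s a + t * Zmu P r γ μ V' h' x s a := by
  simp only [Zmu, Pi.add_apply, Pi.smul_apply, smul_eq_mul, sum_mul_convex_comb]
  ring

theorem Lmu_convex_comb [Fintype A] :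
    Lmu P r ρ₀ γ μ w ((1 - t) • V + t • V') ((1 - t) • h + t • h') x =
      (1 - t) * Lmu P r ρ₀ γ μ w V h x + t * Lmu P r ρ₀ γ μ w V' h' x
        - t * (1 - t) * ((1 / (2 * μ)) * ∑ s, ∑ a,
            w s a * (Zmu P r γ μ V h x s a - Zmu P r γ μ V' h' x s a) ^ 2) := by
  have hquad : ∑ s, ∑ a, w s a *
      ((1 - t) * Zmu P r γ μ V h x s a + t * Zmu P r γ μ V' h' x s a) ^ 2 =
        (1 - t) * ∑ s, ∑ a, w s a * Zmu P r γ μ V h x s a ^ 2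
          + t * ∑ s, ∑ a, w s a * Zmu P r γ μ V' h' x s a ^ 2
          - t * (1 - t) * ∑ s, ∑ a,
              w s a * (Zmu P r γ μ V h x s a - Zmu P r γ μ V' h' x s a) ^ 2 := by
    simp only [← Fintype.sum_prod_type']
    exact sum_mul_convex_comb_sq _ _ _ _ _
  simp only [Lmu, Zmu_convex_comb, hquad, Pi.add_apply, Pi.smul_apply, smul_eq_mul,
    sum_mul_convex_comb]
  ring

end ConvexComb

theorem alm_suboptimality_lower_bound_general
    {S A : Type*} [Fintype S] [Fintype A]
    (P : S → A → S → ℝ)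
    (r : S → A → ℝ)
    (ρ₀ : S → ℝ)
    (γ : ℝ)
    (w : S → A → ℝ)
    (μ : ℝ)
    (xk : S → A → ℝ)
    (Vhat : S → ℝ) (hhat : S → A → ℝ)
    (hhat_nonneg : ∀ s a, 0 ≤ hhat s a)
    (hhat_min : ∀ (V : S → ℝ) (h : S → A → ℝ), (∀ s a, 0 ≤ h s a) →
      Lmu P r ρ₀ γ μ w Vhat hhat xk ≤ Lmu P r ρ₀ γ μ w V h xk)
    (Vp : S → ℝ) (hp : S → A → ℝ) (hp_nonneg : ∀ s a, 0 ≤ hp s a) :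
    Lmu P r ρ₀ γ μ w Vp hp xk - Lmu P r ρ₀ γ μ w Vhat hhat xk
      ≥ (1 / (2 * μ)) * ∑ s, ∑ a,
          w s a * (Zmu P r γ μ Vhat hhat xk s a
                    - Zmu P r γ μ Vp hp xk s a) ^ 2 := by
  refine le_sub_of_forall_le_convex_comb_sub fun t ht => ?_
  rw [← Lmu_convex_comb]
  refine hhat_min _ _ fun s a => ?_
  have ht' : 0 ≤ 1 - t := by linarith [ht.2]
  simpa using add_nonneg (mul_nonneg ht' (hhat_nonneg s a)) (mul_nonneg ht.1.le (hp_nonneg s a))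

/-- Key intermediate inequality: the suboptimality `ε_L` dominates the
weighted squared distance between `x̂ = Z_μ(V̂,ĥ,x_k,·)` and
`x̄ = Z_μ(V₊,h₊,x_k,·)`, up to the factor `1/(2μ)`. -/
theorem alm_suboptimality_lower_bound
    {S A : Type*} [Fintype S] [Fintype A]
    (P : S → A → S → ℝ) (hP : ∀ s a, ∑ s', P s a s' = 1)
    (r : S → A → ℝ)
    (ρ₀ : S → ℝ) (hρ₀ : ∀ s, 0 ≤ ρ₀ s) (hρsum : ∑ s, ρ₀ s = 1)
    (γ : ℝ) (hγ : 0 < γ) (hγ1 : γ < 1)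
    (w : S → A → ℝ) (hw : ∀ s a, 0 < w s a) (hwsum : ∑ s, ∑ a, w s a = 1)
    (μ : ℝ) (hμ : 0 < μ)
    (xk : S → A → ℝ)
    (Vhat : S → ℝ) (hhat : S → A → ℝ)
    (hhat_nonneg : ∀ s a, 0 ≤ hhat s a)
    (hhat_min : ∀ (V : S → ℝ) (h : S → A → ℝ), (∀ s a, 0 ≤ h s a) →
      Lmu P r ρ₀ γ μ w Vhat hhat xk ≤ Lmu P r ρ₀ γ μ w V h xk)
    (Vp : S → ℝ) (hp : S → A → ℝ) (hp_nonneg : ∀ s a, 0 ≤ hp s a) :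
    Lmu P r ρ₀ γ μ w Vp hp xk - Lmu P r ρ₀ γ μ w Vhat hhat xk
      ≥ (1 / (2 * μ)) * ∑ s, ∑ a,
          w s a * (Zmu P r γ μ Vhat hhat xk s a
                    - Zmu P r γ μ Vp hp xk s a) ^ 2 :=
  alm_suboptimality_lower_bound_general P r ρ₀ γ w μ xk Vhat hhat hhat_nonneg hhat_min Vp hp
    hp_nonneg
end
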